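/- Let P_1,…,P_m (m ≥ 2) be n×n orthogonal projection matrices and let M be the mn×mn block matrix whose i-th diagonal block is I_n − (1/2)P_i, whose (i, i−1) block is (1/2)P_i for i = 2,…,m, whose (1, m) block is (1/2)P_1, and whose remaining blocks are zero (so x(t+1) = M x(t) encodes the cycle updates x_i(t+1) = x_i(t) − (1/2)P_i(x_i(t) − x_{i−1}(t))). If λ is an eigenvalue of M with λ ≠ 1, then |λ| < 1. -/

import Mathlib

/-!
Write an eigenvector as blocks `x i`. The `i`-th block equation says that `(λ - 1) • x i` lies in
the range of `P i`, so `P i x i = x i` when `λ ≠ 1`, and then `(2λ - 1) • x i = P i x (i - 1)`.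
Orthogonal projections are contractions, hence `‖2λ - 1‖ ‖x i‖ ≤ ‖x (i - 1)‖`, and summing around
the cycle gives `‖2λ - 1‖ ≤ 1`. This closed disc touches the unit circle only at `λ = 1`.
-/

open Matrix

/-- The `mn × mn` stacked update matrix of the cycle iteration
`x i (t+1) = x i t − (1/2) P i (x i t − x (i-1) t)` (indices mod `m`): its `i`-th diagonal
block is `I − (1/2) P i`, its `(i, i-1)` block is `(1/2) P i`, and all other blocks vanish. -/
noncomputable def cycM (m n : ℕ) [NeZero m] (P : Fin m → Matrix (Fin n) (Fin n) ℝ) :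
    Matrix (Fin m × Fin n) (Fin m × Fin n) ℝ :=
  Matrix.of fun p q =>
    (if q.1 = p.1 then ((1 : Matrix (Fin n) (Fin n) ℝ) - (1 / 2 : ℝ) • P p.1) p.2 q.2 else 0) +
    (if q.1 = p.1 - 1 then ((1 / 2 : ℝ) • P p.1) p.2 q.2 else 0)

theorem Complex.norm_lt_one_of_norm_two_mul_sub_one_le_one {z : ℂ} (h : ‖2 * z - 1‖ ≤ 1)
    (hz : z ≠ 1) : ‖z‖ < 1 := by
  rw [← sq_le_one_iff₀ (norm_nonneg _), Complex.sq_norm, Complex.normSq_apply] at h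
  rw [← sq_lt_one_iff₀ (norm_nonneg _), Complex.sq_norm, Complex.normSq_apply]
  have hz' : z.re ≠ 1 ∨ z.im ≠ 0 := by
    by_contra! h1
    exact hz (Complex.ext h1.1 h1.2)
  simp only [sub_re, mul_re, sub_im, mul_im, re_ofNat, im_ofNat, one_re, one_im] at h
  rcases hz' with h1 | h1
  · have := sq_pos_of_ne_zero (sub_ne_zero.mpr h1)
    nlinarith [sq_nonneg z.im]
  · have := sq_pos_of_ne_zero h1
    nlinarith [sq_nonneg (z.re - 1)]

theorem le_one_of_forall_mul_le_comp {ι : Type*} [Fintype ι] {a : ι → ℝ} {c : ℝ}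
    (σ : Equiv.Perm ι) (hpos : 0 < ∑ i, a i) (h : ∀ i, c * a i ≤ a (σ i)) : c ≤ 1 := by
  refine le_of_mul_le_mul_right ?_ hpos
  calc c * ∑ i, a i = ∑ i, c * a i := Finset.mul_sum _ _ _
    _ ≤ ∑ i, a (σ i) := Finset.sum_le_sum fun i _ => h i
    _ = 1 * ∑ i, a i := by rw [one_mul, Equiv.sum_comp σ a]

section
open scoped Matrix.Norms.L2Operator

theorem Matrix.norm_toLp_mulVec_le_of_isStarProjection {𝕜 n : Type*} [RCLike 𝕜] [Fintype n]
    [DecidableEq n] {Q : Matrix n n 𝕜} (hQ : IsStarProjection Q) (x : n → 𝕜) :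
    ‖WithLp.toLp 2 (Q *ᵥ x)‖ ≤ ‖WithLp.toLp 2 x‖ :=
  (l2_opNorm_mulVec Q (WithLp.toLp 2 x)).trans
    (mul_le_of_le_one_left (norm_nonneg _) hQ.norm_le)

end

theorem Matrix.isStarProjection_map_ofReal {n : Type*} [Fintype n] {P : Matrix n n ℝ}
    (hsymm : P.IsSymm) (hidem : IsIdempotentElem P) :
    IsStarProjection (P.map (algebraMap ℝ ℂ)) where
  isIdempotentElem := by
    rw [IsIdempotentElem, ← Matrix.map_mul, hidem.eq]
  isSelfAdjoint := (isHermitian_iff_isSymm.mpr hsymm).map _ fun _ => (Complex.conj_ofReal _).symm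

theorem Matrix.mulVec_eq_two_mul_sub_one_smul {K n : Type*} [Field K] [CharZero K] [Fintype n]
    {Q : Matrix n n K} (hQ : IsIdempotentElem Q) {μ : K} (hμ : μ ≠ 1) {x y : n → K}
    (h : μ • x = x - (1 / 2 : K) • (Q *ᵥ x) + (1 / 2 : K) • (Q *ᵥ y)) :
    Q *ᵥ y = (2 * μ - 1) • x := by
  have hdiff : (2 * (μ - 1)) • x = Q *ᵥ (y - x) := by
    rw [mulVec_sub]
    linear_combination (norm := module) (2 : K) • h
  have hfix : Q *ᵥ x = x := by
    have hQdiff : (2 * (μ - 1)) • (Q *ᵥ x) = (2 * (μ - 1)) • x := by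
      rw [← mulVec_smul, hdiff, mulVec_mulVec, hQ.eq]
    exact smul_right_injective _ (mul_ne_zero two_ne_zero (sub_ne_zero.mpr hμ)) hQdiff
  rw [← sub_add_cancel y x, mulVec_add, ← hdiff, hfix]
  module

theorem cycM_map_mulVec_apply {K : Type*} [Field K] [Algebra ℝ K] {m n : ℕ} [NeZero m]
    (P : Fin m → Matrix (Fin n) (Fin n) ℝ) (v : Fin m × Fin n → K) (i : Fin m) :
    Function.curry ((cycM m n P).map (algebraMap ℝ K) *ᵥ v) i =
      Function.curry v i - (1 / 2 : K) • ((P i).map (algebraMap ℝ K) *ᵥ Function.curry v i) +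
        (1 / 2 : K) • ((P i).map (algebraMap ℝ K) *ᵥ Function.curry v (i - 1)) := by
  funext j
  simp only [Function.curry_apply, mulVec, dotProduct, Fintype.sum_prod_type, cycM, map_apply,
    of_apply, map_add, apply_ite (algebraMap ℝ K), map_zero, add_mul, ite_mul, zero_mul,
    Finset.sum_add_distrib, Pi.add_apply, Pi.sub_apply, Pi.smul_apply, smul_eq_mul, Finset.mul_sum]
  congr 1
  · rw [Finset.sum_eq_single i (fun k _ hk => by simp [hk]) (by simp)]
    simp [Matrix.sub_apply, Matrix.one_apply, sub_mul, Finset.sum_sub_distrib, mul_assoc, map_ofNat]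
  · rw [Finset.sum_eq_single (i - 1) (fun k _ hk => by simp [hk]) (by simp)]
    simp [mul_assoc, map_ofNat]

theorem stmt_16_general (m n : ℕ) [NeZero m]
    (P : Fin m → Matrix (Fin n) (Fin n) ℝ)
    (hsymm : ∀ i, (P i).IsSymm) (hidem : ∀ i, P i * P i = P i)
    (lam : ℂ)
    (hev : Module.End.HasEigenvalue
      (Matrix.mulVecLin ((cycM m n P).map (algebraMap ℝ ℂ))) lam)
    (hne : lam ≠ 1) :
    ‖lam‖ < 1 := by
  obtain ⟨v, hv⟩ := hev.exists_hasEigenvector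
  have hMv : (cycM m n P).map (algebraMap ℝ ℂ) *ᵥ v = lam • v := hv.apply_eq_smul
  set x := Function.curry v
  have hproj i := isStarProjection_map_ofReal (hsymm i) (hidem i)
  have hstep i : (P i).map (algebraMap ℝ ℂ) *ᵥ x (i - 1) = (2 * lam - 1) • x i :=
    mulVec_eq_two_mul_sub_one_smul (hproj i).isIdempotentElem hne
      (by rw [← cycM_map_mulVec_apply, hMv]; rfl)
  have hle i : ‖2 * lam - 1‖ * ‖WithLp.toLp 2 (x i)‖ ≤ ‖WithLp.toLp 2 (x (i - 1))‖ := by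
    rw [← norm_smul, ← WithLp.toLp_smul, ← hstep i]
    exact norm_toLp_mulVec_le_of_isStarProjection (hproj i) _
  have hpos : 0 < ∑ i, ‖WithLp.toLp 2 (x i)‖ := by
    obtain ⟨p, hp⟩ := Function.ne_iff.mp hv.2
    refine Finset.sum_pos' (fun _ _ => norm_nonneg _) ⟨p.1, Finset.mem_univ _, ?_⟩
    exact norm_pos_iff.mpr fun h => hp (congrFun (congrArg WithLp.ofLp h) p.2)
  exact Complex.norm_lt_one_of_norm_two_mul_sub_one_le_one
    (le_one_of_forall_mul_le_comp (Equiv.subRight 1) hpos hle) hne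

/-- If `P 0, …, P (m-1)` are orthogonal projections (symmetric idempotents) and
`λ ≠ 1` is a (complex) eigenvalue of the cycle update matrix `M`, then `|λ| < 1`. -/
theorem stmt_16 (m n : ℕ) [NeZero m] (hm : 2 ≤ m)
    (P : Fin m → Matrix (Fin n) (Fin n) ℝ)
    (hsymm : ∀ i, (P i).IsSymm) (hidem : ∀ i, P i * P i = P i)
    (lam : ℂ)
    (hev : Module.End.HasEigenvalue
      (Matrix.mulVecLin ((cycM m n P).map (algebraMap ℝ ℂ))) lam)
    (hne : lam ≠ 1) :
    ‖lam‖ < 1 :=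
  stmt_16_general m n P hsymm hidem lam hev hne
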